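/- For every m ≥ 1, the formula □p_0 → □□p_0, where □φ abbreviates ¬(⊤ S ¬φ), does not belong to LTL_{Past,m}: there exist a model V and a state a ∈ ℕ at which □p_0 → □□p_0 is false. -/

import Mathlib

/-- Formulas of the language of `LTL_{Past,m}`: atoms, negation, conjunction,
`N` (next) and `S` (since). -/
inductive Formula : Type
  | atom : ℕ → Formula
  | neg : Formula → Formula
  | conj : Formula → Formula → Formula
  | next : Formula → Formula
  | since : Formula → Formula → Formula
deriving DecidableEq

namespace Formula

/-- Implication, defined as usual from `¬` and `∧`. -/
def imp (φ ψ : Formula) : Formula := .neg (.conj φ (.neg ψ))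

/-- Disjunction, defined as usual from `¬` and `∧`. -/
def disj (φ ψ : Formula) : Formula := .neg (.conj (.neg φ) (.neg ψ))

/-- The constant true formula `⊤`, defined as usual. -/
def top : Formula := imp (.atom 0) (.atom 0)

/-- `□φ` abbreviates `¬(⊤ S ¬φ)`. -/
def box (φ : Formula) : Formula := .neg (.since top (.neg φ))

end Formula

/-- Truth of a formula at a state `a : ℕ` in a model given by a valuation
`V : ℕ → Set ℕ`, in the bounded (measure of intransitivity `m`) semantics. -/
def Sat (m : ℕ) (V : ℕ → Set ℕ) : Formula → ℕ → Prop
  | .atom i, a => a ∈ V i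
  | .neg φ, a => ¬ Sat m V φ a
  | .conj φ ψ, a => Sat m V φ a ∧ Sat m V ψ a
  | .next φ, a => Sat m V φ (a + 1)
  | .since φ ψ, a =>
      ∃ b, a ≤ b ∧ b ≤ a + m ∧ Sat m V ψ b ∧ ∀ c, a ≤ c → c < b → Sat m V φ c

/-- A formula is valid in a model `V` if it is true at every state. -/
def ValidIn (m : ℕ) (V : ℕ → Set ℕ) (φ : Formula) : Prop := ∀ a : ℕ, Sat m V φ a

/-- The logic `LTL_{Past,m}`: the set of formulas valid in every model. -/
def Logic (m : ℕ) : Set Formula := { φ | ∀ V : ℕ → Set ℕ, ValidIn m V φ }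

/-- Truth at a state in the unbounded (transitive) semantics of `LTL`. -/
def SatU (V : ℕ → Set ℕ) : Formula → ℕ → Prop
  | .atom i, a => a ∈ V i
  | .neg φ, a => ¬ SatU V φ a
  | .conj φ ψ, a => SatU V φ a ∧ SatU V ψ a
  | .next φ, a => SatU V φ (a + 1)
  | .since φ ψ, a =>
      ∃ b, a ≤ b ∧ SatU V ψ b ∧ ∀ c, a ≤ c → c < b → SatU V φ c

/-- The transitive logic `LTL`: formulas true at every state of every model in
the unbounded semantics. -/
def LogicU : Set Formula := { φ | ∀ (V : ℕ → Set ℕ) (a : ℕ), SatU V φ a }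

/-- Truth at a state in the non-uniformly non-transitive semantics, where the
reach of `S` at state `a` is bounded by `f a` for a bound function `f`. -/
def SatB (f : ℕ → ℕ) (V : ℕ → Set ℕ) : Formula → ℕ → Prop
  | .atom i, a => a ∈ V i
  | .neg φ, a => ¬ SatB f V φ a
  | .conj φ ψ, a => SatB f V φ a ∧ SatB f V ψ a
  | .next φ, a => SatB f V φ (a + 1)
  | .since φ ψ, a =>
      ∃ b, a ≤ b ∧ b ≤ f a ∧ SatB f V ψ b ∧ ∀ c, a ≤ c → c < b → SatB f V φ c

/-- The non-uniformly non-transitive logic `LTL_{Past}`: formulas true at every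
state of every model over every bound function. -/
def LogicPast : Set Formula :=
  { φ | ∀ f : ℕ → ℕ, (∀ i, i < f i) → (∀ i, f i < f (i + 1)) →
      ∀ (V : ℕ → Set ℕ) (a : ℕ), SatB f V φ a }

/-- Substitutions map atoms to formulas and extend homomorphically. -/
def substF (σ : ℕ → Formula) : Formula → Formula
  | .atom i => σ i
  | .neg φ => .neg (substF σ φ)
  | .conj φ ψ => .conj (substF σ φ) (substF σ ψ)
  | .next φ => .next (substF σ φ)
  | .since φ ψ => .since (substF σ φ) (substF σ ψ)

/-- An inference rule: a finite list of premises and a conclusion. -/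
structure Rule : Type where
  premises : List Formula
  conclusion : Formula
deriving DecidableEq

/-- A rule is valid in a model `V` if validity of all premises in `V` implies
validity of the conclusion in `V`. -/
def RuleValid (m : ℕ) (V : ℕ → Set ℕ) (r : Rule) : Prop :=
  (∀ φ ∈ r.premises, ValidIn m V φ) → ValidIn m V r.conclusion

/-- A rule is admissible in `LTL_{Past,m}` if every substitution making all
premises theorems also makes the conclusion a theorem. -/
def Admissible (m : ℕ) (r : Rule) : Prop :=
  ∀ σ : ℕ → Formula,
    (∀ φ ∈ r.premises, substF σ φ ∈ Logic m) → substF σ r.conclusion ∈ Logic m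

/-- Admissibility in the transitive logic `LTL`. -/
def AdmissibleU (r : Rule) : Prop :=
  ∀ σ : ℕ → Formula,
    (∀ φ ∈ r.premises, substF σ φ ∈ LogicU) → substF σ r.conclusion ∈ LogicU

/-- The number of symbols in a formula. -/
def sizeF : Formula → ℕ
  | .atom _ => 1
  | .neg φ => sizeF φ + 1
  | .conj φ ψ => sizeF φ + sizeF ψ + 1
  | .next φ => sizeF φ + 1
  | .since φ ψ => sizeF φ + sizeF ψ + 1

/-- The number of symbols in a rule. -/
def ruleSize (r : Rule) : ℕ :=
  (r.premises.map sizeF).sum + sizeF r.conclusion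

/-- An (injective) numerical encoding of formulas. -/
def encF : Formula → ℕ
  | .atom i => 5 * i
  | .neg φ => 5 * encF φ + 1
  | .conj φ ψ => 5 * Nat.pair (encF φ) (encF ψ) + 2
  | .next φ => 5 * encF φ + 3
  | .since φ ψ => 5 * Nat.pair (encF φ) (encF ψ) + 4

/-- An (injective) numerical encoding of rules. -/
def encR (r : Rule) : ℕ :=
  Nat.pair (Encodable.encode (r.premises.map encF)) (encF r.conclusion)

/-- `lit true φ = φ` and `lit false φ = ¬φ`. -/
def lit (t : Bool) (φ : Formula) : Formula := if t then φ else .neg φ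

/-- Conjunction of a list of formulas. -/
def bigConj : List Formula → Formula
  | [] => Formula.top
  | [φ] => φ
  | φ :: ψ :: rest => .conj φ (bigConj (ψ :: rest))

/-- Disjunction of a list of formulas. -/
def bigDisj : List Formula → Formula
  | [] => .neg Formula.top
  | [φ] => φ
  | φ :: ψ :: rest => Formula.disj φ (bigDisj (ψ :: rest))

/-- A single disjunct of a reduced normal form over variables `x_1,…,x_n`
(the atoms `0,…,n-1`): for each `i` a literal over `x_i`, for each `i` a
literal over `N x_i`, and for each pair `i ≠ k` a literal over `x_i S x_k`. -/
def disjunct (n : ℕ) (t0 t1 : Fin n → Bool) (t2 : Fin n → Fin n → Bool) : Formula :=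
  bigConj
    (((List.finRange n).map fun i => lit (t0 i) (.atom i)) ++
     ((List.finRange n).map fun i => lit (t1 i) (.next (.atom i))) ++
     ((List.finRange n).flatMap fun i =>
        ((List.finRange n).filter fun k => k != i).map fun k =>
          lit (t2 i k) (.since (.atom i) (.atom k))))

/-- A rule is in reduced normal form if it has the shape `ε / x_1`, where `ε`
is a disjunction of disjuncts as above. -/
def IsRNF (r : Rule) : Prop :=
  ∃ n : ℕ, 0 < n ∧
    ∃ ds : List ((Fin n → Bool) × (Fin n → Bool) × (Fin n → Fin n → Bool)),
      ds ≠ [] ∧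
      r.premises = [bigDisj (ds.map fun d => disjunct n d.1 d.2.1 d.2.2)] ∧
      r.conclusion = .atom 0

/-- Boolean formulas built from argument places `p_1,…,p_n, q_1,…,q_k` using
only the Boolean connectives `¬` and `∧`. -/
inductive BForm (n k : ℕ) : Type
  | pvar : Fin n → BForm n k
  | qvar : Fin k → BForm n k
  | neg : BForm n k → BForm n k
  | conj : BForm n k → BForm n k → BForm n k

/-- Substitute formulas for the argument places of a Boolean formula. -/
def BForm.substB {n k : ℕ} (α : Fin n → Formula) (δ : Fin k → Formula) :
    BForm n k → Formula
  | .pvar i => α i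
  | .qvar j => δ j
  | .neg φ => Formula.neg (BForm.substB α δ φ)
  | .conj φ ψ => Formula.conj (BForm.substB α δ φ) (BForm.substB α δ ψ)

/-! `□φ` only looks `m` steps ahead, so `□□φ` looks `2m` steps ahead. If `p_0` holds exactly on
`[0, m]`, then `□p_0` holds at `0` but fails at `m ≥ 1`, because `p_0` fails at `m + 1 ≤ 2m`;
hence `□□p_0` fails at `0`. -/

namespace Sat

variable {m : ℕ} {V : ℕ → Set ℕ}

theorem top (a : ℕ) : Sat m V Formula.top a := by
  simp only [Formula.top, Formula.imp, Sat, not_and, not_not, imp_self]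

theorem imp_iff {φ ψ : Formula} {a : ℕ} :
    Sat m V (φ.imp ψ) a ↔ (Sat m V φ a → Sat m V ψ a) := by
  simp only [Formula.imp, Sat, not_and, not_not]

theorem box_iff {φ : Formula} {a : ℕ} :
    Sat m V φ.box a ↔ ∀ b, a ≤ b → b ≤ a + m → Sat m V φ b := by
  simp only [Formula.box, Sat, top, implies_true, and_true, not_exists, not_and, not_not]

end Sat

theorem sat_box_atom_Iic_iff {m i a : ℕ} :
    Sat m (fun _ => Set.Iic m) (Formula.box (Formula.atom i)) a ↔ a = 0 := by
  simp only [Sat.box_iff, Sat, Set.mem_Iic]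
  exact ⟨fun h => by have := h (a + m) le_self_add le_rfl; omega, fun ha b _ hb => by omega⟩

/-- `□p_0 → □□p_0` (with `□φ = ¬(⊤ S ¬φ)`) is not in
`LTL_{Past,m}`: it fails at some state of some model. -/
theorem box_box_not_in_logic (m : ℕ) (hm : 1 ≤ m) :
    ∃ (V : ℕ → Set ℕ) (a : ℕ),
      ¬ Sat m V
          ((Formula.box (Formula.atom 0)).imp
            (Formula.box (Formula.box (Formula.atom 0)))) a := by
  refine ⟨fun _ => Set.Iic m, 0, fun h => ?_⟩
  have hbox : Sat m (fun _ => Set.Iic m) (Formula.box (Formula.atom 0)) m :=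
    Sat.box_iff.mp (Sat.imp_iff.mp h (sat_box_atom_Iic_iff.mpr rfl)) m (Nat.zero_le m) (by omega)
  exact absurd (sat_box_atom_Iic_iff.mp hbox) (by omega)
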